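/- Each of the cycle-removal strategies going up (≻^u), going down (≻^d), and refined going up (≻^{ru}) produces an acyclic relation. -/

import Mathlib

variable {F : Type*}

/-- A relation is acyclic if it admits no directed cycle. -/
def Acyclic (r : F → F → Prop) : Prop := ∀ a, ¬ Relation.TransGen r a a

/-- Union of the priority levels `≻_1, …, ≻_k`. -/
def unionTo (prec : ℕ → F → F → Prop) (k : ℕ) : F → F → Prop :=
  fun a b => ∃ i, 1 ≤ i ∧ i ≤ k ∧ prec i a b

/-- The level of a pair: the minimal index `i` with `(a,b) ∈ ≻_i`. -/
noncomputable def levelOf (prec : ℕ → F → F → Prop) (a b : F) : ℕ :=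
  sInf {i | prec i a b}

/-- Going up `≻^u`: the union `≻_1 ∪ … ∪ ≻_k` for the largest `k ≤ n` such that this
union is acyclic (equivalently, membership in some acyclic prefix union, since
prefix unions are nested and subrelations of acyclic relations are acyclic). -/
def GoingUp (prec : ℕ → F → F → Prop) (n : ℕ) : F → F → Prop :=
  fun a b => ∃ k, k ≤ n ∧ Acyclic (unionTo prec k) ∧ unionTo prec k a b

/-- One step of the going down procedure: remove from `r` all pairs of level `i`
lying on a directed cycle of `r`. -/
noncomputable def goingDownStep (prec : ℕ → F → F → Prop) (i : ℕ)
    (r : F → F → Prop) : F → F → Prop :=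
  fun a b => r a b ∧ ¬ (levelOf prec a b = i ∧ Relation.TransGen r b a)

/-- Iteration of the going down procedure, removing level `n`, then `n-1`, etc.
(removals performed on an acyclic relation are no-ops, so the `while cyclic` guard
is immaterial). -/
noncomputable def goingDownAux (prec : ℕ → F → F → Prop) (n : ℕ) : ℕ → (F → F → Prop)
  | 0 => unionTo prec n
  | (j + 1) => goingDownStep prec (n - j) (goingDownAux prec n j)

/-- Going down `≻^d`. -/
noncomputable def GoingDown (prec : ℕ → F → F → Prop) (n : ℕ) : F → F → Prop :=
  goingDownAux prec n n

/-- Iteration of the refined going up procedure: start from `≻_1` minus the pairs on a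
cycle w.r.t. `≻_1`; at stage `i ≥ 2`, add the pairs of level `i` that do not lie on any
cycle w.r.t. the current relation united with `≻_i`. -/
noncomputable def refinedAux (prec : ℕ → F → F → Prop) : ℕ → (F → F → Prop)
  | 0 => fun a b => prec 1 a b ∧ ¬ Relation.TransGen (prec 1) b a
  | (j + 1) => fun a b => refinedAux prec j a b ∨
      (levelOf prec a b = j + 2 ∧ prec (j + 2) a b ∧
        ¬ Relation.TransGen (fun x y => refinedAux prec j x y ∨ prec (j + 2) x y) b a)

/-- Refined going up `≻^{ru}` (for levels `1, …, n`). -/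
noncomputable def RefinedGoingUp (prec : ℕ → F → F → Prop) (n : ℕ) : F → F → Prop :=
  refinedAux prec (n - 1)

/-- A relation all of whose edges lie on no cycle is acyclic. -/
lemma acyclic_of_edges {r : F → F → Prop}
    (h : ∀ a b, r a b → ¬ Relation.TransGen r b a) : Acyclic r := by
  intro a ha
  cases ha with
  | single h' => exact h a a h' (Relation.TransGen.single h')
  | tail hab hba => exact h _ _ hba hab

/-- Decomposition of a path in a union: either it stays in `r`, or it crosses a
`q`-edge. -/
lemma cycle_decomp {r q : F → F → Prop} {a b : F}
    (h : Relation.TransGen (fun x y => r x y ∨ q x y) a b) :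
    Relation.TransGen r a b ∨
      ∃ x y, q x y ∧ Relation.ReflTransGen (fun x y => r x y ∨ q x y) a x ∧
        Relation.ReflTransGen (fun x y => r x y ∨ q x y) y b := by
  induction h with
  | single h' =>
    rcases h' with h' | h'
    · exact Or.inl (Relation.TransGen.single h')
    · exact Or.inr ⟨_, _, h', .refl, .refl⟩
  | tail h' hedge ih =>
    rcases ih with ht | ⟨x, y, hq, hax, hyb⟩
    · rcases hedge with he | he
      · exact Or.inl (ht.tail he)
      · exact Or.inr ⟨_, _, he,
          Relation.TransGen.to_reflTransGen (Relation.TransGen.mono (fun a b h => Or.inl h) _ _ ht), .refl⟩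
    · exact Or.inr ⟨x, y, hq, hax, hyb.tail hedge⟩

lemma goingUp_acyclic (prec : ℕ → F → F → Prop) (n : ℕ) :
    Acyclic (GoingUp prec n) := by
  classical
  have hP0 : Acyclic (unionTo prec 0) := by
    intro a ha
    cases ha with
    | single h' => obtain ⟨i, h1, h2, _⟩ := h'; omega
    | tail _ h' => obtain ⟨i, h1, h2, _⟩ := h'; omega
  set K := Nat.findGreatest (fun k => Acyclic (unionTo prec k)) n with hKdef
  have hK : Acyclic (unionTo prec K) := Nat.findGreatest_spec (P := fun k => Acyclic (unionTo prec k)) (Nat.zero_le n) hP0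
  have hsub : ∀ a b, GoingUp prec n a b → unionTo prec K a b := by
    rintro a b ⟨k, hkn, hk, i, h1, h2, hp⟩
    exact ⟨i, h1, le_trans h2 (Nat.le_findGreatest hkn hk), hp⟩
  intro a ha
  exact hK a (Relation.TransGen.mono hsub _ _ ha)

lemma gd_sub (prec : ℕ → F → F → Prop) (n : ℕ) :
    ∀ j a b, goingDownAux prec n j a b → unionTo prec n a b := by
  intro j
  induction j with
  | zero => exact fun a b h => h
  | succ j ih => exact fun a b h => ih a b h.1

lemma gd_inv (prec : ℕ → F → F → Prop) (n : ℕ) :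
    ∀ j, j ≤ n → ∀ a b, goingDownAux prec n j a b →
      n - j < levelOf prec a b → ¬ Relation.TransGen (goingDownAux prec n j) b a := by
  intro j
  induction j with
  | zero =>
    intro _ a b hab hl _
    obtain ⟨i, h1, h2, hp⟩ := hab
    have : levelOf prec a b ≤ i := Nat.sInf_le hp
    omega
  | succ j ih =>
    intro hj a b hab hl hcyc
    have hcyc' : Relation.TransGen (goingDownAux prec n j) b a :=
      Relation.TransGen.mono (fun x y h => h.1) _ _ hcyc
    obtain ⟨hab', hcond⟩ := hab
    by_cases hlev : levelOf prec a b = n - j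
    · exact hcond ⟨hlev, hcyc'⟩
    · exact ih (by omega) a b hab' (by omega) hcyc'

lemma goingDown_acyclic (prec : ℕ → F → F → Prop) (n : ℕ)
    (h0 : ∀ a b, ¬ prec 0 a b) : Acyclic (GoingDown prec n) := by
  apply acyclic_of_edges
  intro a b hab
  have hu : unionTo prec n a b := gd_sub prec n n a b hab
  have hlev : 0 < levelOf prec a b := by
    obtain ⟨i, h1, h2, hp⟩ := hu
    have hmem : levelOf prec a b ∈ {i | prec i a b} := Nat.sInf_mem ⟨i, hp⟩
    rcases Nat.eq_zero_or_pos (levelOf prec a b) with h | h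
    · exact absurd (h ▸ hmem) (h0 a b)
    · exact h
  exact gd_inv prec n n le_rfl a b hab (by omega)

lemma refined_acyclic (prec : ℕ → F → F → Prop) :
    ∀ j, Acyclic (refinedAux prec j) := by
  intro j
  induction j with
  | zero =>
    apply acyclic_of_edges
    intro a b hab hcyc
    exact hab.2 (Relation.TransGen.mono (fun x y h => h.1) _ _ hcyc)
  | succ j ih =>
    intro a ha
    rcases cycle_decomp (r := refinedAux prec j)
        (q := fun a b => levelOf prec a b = j + 2 ∧ prec (j + 2) a b ∧
          ¬ Relation.TransGen
            (fun x y => refinedAux prec j x y ∨ prec (j + 2) x y) b a) ha with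
      hr | ⟨x, y, hq, hax, hya⟩
    · exact ih a hr
    · have hyx : Relation.ReflTransGen
          (fun x y => refinedAux prec j x y ∨ prec (j + 2) x y) y x := by
        refine Relation.ReflTransGen.mono ?_ _ _ (hya.trans hax)
        rintro u v (h | ⟨_, h, _⟩)
        · exact Or.inl h
        · exact Or.inr h
      rcases Relation.reflTransGen_iff_eq_or_transGen.mp hyx with rfl | ht
      · exact hq.2.2 (Relation.TransGen.single (Or.inr hq.2.1))
      · exact hq.2.2 ht

/-- Each of the cycle-removal strategies going up (`≻^u`), going down (`≻^d`) and
refined going up (`≻^{ru}`) produces an acyclic relation. -/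
theorem strategies_acyclic [Finite F]
    (prec : ℕ → F → F → Prop) (n : ℕ) (hn : 1 ≤ n)
    (h0 : ∀ a b, ¬ prec 0 a b)
    (hsupp : ∀ i, n < i → ∀ a b, ¬ prec i a b) :
    Acyclic (GoingUp prec n) ∧ Acyclic (GoingDown prec n) ∧
      Acyclic (RefinedGoingUp prec n) := by
  exact ⟨goingUp_acyclic prec n, goingDown_acyclic prec n h0,
    refined_acyclic prec (n - 1)⟩
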